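/- arXiv:2107.08678 — 2 statements merged into one kernel-verified Lean document; each statement's English description precedes it below -/
import Mathlib

section
/- Let a and q be nonzero complex numbers and let m ≥ n ≥ 0 be integers. Then Σ_{i=0}^{n} (−1)^i {m}_i {n}_i {m+n−i−2; a}_{n−i} {n−1; a}_{n−i} = {m+n−1; a}_n {n−2; a}_n. -/
open Finset

/-- The balanced q-bracket `{n} = q^n - q^(-n)`. -/
noncomputable def qbr (q : ℂ) (n : ℤ) : ℂ := q ^ n - q ^ (-n)

/-- The two-variable bracket `{n; a} = a q^n - a⁻¹ q^(-n)`. -/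
noncomputable def qbrA (a q : ℂ) (n : ℤ) : ℂ := a * q ^ n - a⁻¹ * q ^ (-n)

/-- Descending product `{n}_i = {n}{n-1}⋯{n-i+1}` (equal to 1 when `i = 0`). -/
noncomputable def qbrP (q : ℂ) (n : ℤ) (i : ℕ) : ℂ := ∏ k ∈ Finset.range i, qbr q (n - k)

/-- Descending product `{n; a}_i = {n; a}{n-1; a}⋯{n-i+1; a}` (equal to 1 when `i = 0`). -/
noncomputable def qbrAP (a q : ℂ) (n : ℤ) (i : ℕ) : ℂ := ∏ k ∈ Finset.range i, qbrA a q (n - k)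

/-- Ascending product `{n; a}{n+1; a}⋯{n+i-1; a}` (used for `{-n; a}_i`, equal to 1 when `i = 0`). -/
noncomputable def qbrAPasc (a q : ℂ) (n : ℤ) (i : ℕ) : ℂ := ∏ k ∈ Finset.range i, qbrA a q (n + k)

/-- The factorial `{n}! = {n}_n`. -/
noncomputable def qfac (q : ℂ) (n : ℕ) : ℂ := qbrP q n n

/-- The balanced q-binomial coefficient `[n choose i] = {n}!/({i}!{n-i}!)`. -/
noncomputable def qbinom (q : ℂ) (n i : ℕ) : ℂ := qfac q n / (qfac q i * qfac q (n - i))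

/-!
Write `S_n` for the sum with `m` replaced by an arbitrary integer `M`, and `T_{n,i}` for its
`i`-th summand. Then `S_{n+1} = {M+n; a}{n-1; a} S_n`, and the theorem follows by induction.
The recursion holds because `T_{n+1,i} - {M+n; a}{n-1; a} T_{n,i}` telescopes: it equals
`K_i - K_{i-1}` with `K_i = {i+1}{M-i} T_{n,i}` and `K_{-1} = 0`. After cancelling the common
factors, each of these equalities is a three-term identity between brackets, and the sum of the
differences is `K_{n+1} = 0` since `{n}_{n+1}` contains the factor `{0} = 0`.
-/

section Products

variable (a q : ℂ)

@[simp]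
lemma qbrP_zero (x : ℤ) : qbrP q x 0 = 1 := prod_range_zero _

@[simp]
lemma qbrAP_zero (x : ℤ) : qbrAP a q x 0 = 1 := prod_range_zero _

lemma qbrP_succ (x : ℤ) (s : ℕ) : qbrP q x (s + 1) = qbrP q x s * qbr q (x - s) :=
  prod_range_succ _ _

lemma qbrAP_succ (x : ℤ) (s : ℕ) : qbrAP a q x (s + 1) = qbrAP a q x s * qbrA a q (x - s) :=
  prod_range_succ _ _

lemma qbrP_succ' (x : ℤ) (s : ℕ) : qbrP q x (s + 1) = qbr q x * qbrP q (x - 1) s := by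
  rw [qbrP, prod_range_succ', mul_comm]
  simp only [Nat.cast_add, Nat.cast_one, Nat.cast_zero, sub_zero, sub_add_eq_sub_sub_swap]
  rfl

lemma qbrAP_succ' (x : ℤ) (s : ℕ) : qbrAP a q x (s + 1) = qbrA a q x * qbrAP a q (x - 1) s := by
  rw [qbrAP, prod_range_succ', mul_comm]
  simp only [Nat.cast_add, Nat.cast_one, Nat.cast_zero, sub_zero, sub_add_eq_sub_sub_swap]
  rfl

lemma qbrP_natCast_succ_self (n : ℕ) : qbrP q n (n + 1) = 0 :=
  prod_eq_zero (self_mem_range_succ n) (by simp [qbr])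

end Products

section Identities

variable {a q : ℂ}

lemma qbrA_mul_qbrA_sub_qbrA_mul_qbrA (ha : a ≠ 0) (hq : q ≠ 0) (M N : ℤ) :
    qbrA a q (M + N - 1) * qbrA a q N - qbrA a q (M + N) * qbrA a q (N - 1) =
      qbr q 1 * qbr q M := by
  have hM := zpow_ne_zero M hq
  have hN := zpow_ne_zero N hq
  simp only [qbr, qbrA, sub_eq_add_neg, neg_add, zpow_add₀ hq, zpow_neg, zpow_one]
  field_simp
  ring

lemma qbr_mul_qbrA_mul_qbrA_sub (ha : a ≠ 0) (hq : q ≠ 0) (M N I : ℤ) :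
    qbr q (N + 1) * qbrA a q (M + N - I - 2) * qbrA a q N
        - qbr q (N - I) * qbrA a q (M + N) * qbrA a q (N - 1) =
      qbr q (I + 2) * qbr q (M - I - 1) * qbr q (N - I)
        + qbr q (I + 1) * qbrA a q (M + N - I - 2) * qbrA a q I := by
  have hM := zpow_ne_zero M hq
  have hN := zpow_ne_zero N hq
  have hI := zpow_ne_zero I hq
  simp only [qbr, qbrA, sub_eq_add_neg, neg_add, zpow_add₀ hq, zpow_neg, zpow_one, neg_neg,
    show (2 : ℤ) = 1 + 1 by norm_num]
  field_simp
  ring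

end Identities

namespace BracketSum

noncomputable def term (a q : ℂ) (M : ℤ) (n i : ℕ) : ℂ :=
  (-1) ^ i * qbrP q M i * qbrP q n i * qbrAP a q (M + n - i - 2) (n - i) *
    qbrAP a q (n - 1) (n - i)

noncomputable def telescoper (a q : ℂ) (M : ℤ) (n i : ℕ) : ℂ :=
  qbr q (i + 1) * qbr q (M - i) * term a q M n i

variable {a q : ℂ} (M : ℤ)

lemma term_succ_sub_mul_term (ha : a ≠ 0) (hq : q ≠ 0) {n i : ℕ} (hi : i < n) :
    term a q M (n + 1) (i + 1) - qbrA a q (M + n) * qbrA a q (n - 1) * term a q M n (i + 1) =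
      telescoper a q M n (i + 1) - telescoper a q M n i := by
  obtain ⟨j, rfl⟩ : ∃ j, n = i + 1 + j := ⟨n - i - 1, by omega⟩
  simp only [telescoper, term, show i + 1 + j + 1 - (i + 1) = j + 1 by omega,
    show i + 1 + j - (i + 1) = j by omega, show i + 1 + j - i = j + 1 by omega]
  push_cast
  rw [qbrP_succ q M i, qbrP_succ' q _ i, qbrP_succ q _ i, qbrAP_succ a q (i + 1 + j - 1) j]
  simp only [qbrAP_succ']
  linear_combination (norm := ring_nf) (-1) ^ (i + 1) * qbrP q M i * qbr q (M - i) *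
    qbrP q (i + 1 + j) i * qbrAP a q (M + j - 2) j * qbrAP a q (i + j) j *
    qbr_mul_qbrA_mul_qbrA_sub ha hq M (i + 1 + j) i

lemma term_zero_sub_mul_term (ha : a ≠ 0) (hq : q ≠ 0) (n : ℕ) :
    term a q M (n + 1) 0 - qbrA a q (M + n) * qbrA a q (n - 1) * term a q M n 0 =
      telescoper a q M n 0 := by
  simp only [telescoper, term, Nat.sub_zero, qbrP_zero]
  push_cast
  rw [qbrAP_succ', qbrAP_succ']
  linear_combination (norm := ring_nf) qbrAP a q (M + n - 2) n * qbrAP a q (n - 1) n *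
    qbrA_mul_qbrA_sub_qbrA_mul_qbrA ha hq M n

lemma term_eq_zero_at_succ (n : ℕ) : term a q M n (n + 1) = 0 := by
  rw [term, qbrP_natCast_succ_self]
  ring

lemma telescoper_eq_zero_at_succ (n : ℕ) : telescoper a q M n (n + 1) = 0 := by
  rw [telescoper, term_eq_zero_at_succ, mul_zero]

lemma term_succ_succ_self (n : ℕ) : term a q M (n + 1) (n + 1) = -telescoper a q M n n := by
  simp only [telescoper, term, Nat.sub_self, qbrAP_zero]
  rw [qbrP_succ q M n, qbrP_succ' q _ n]
  push_cast
  ring_nf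

lemma sum_term_succ (ha : a ≠ 0) (hq : q ≠ 0) (n : ℕ) :
    ∑ i ∈ range (n + 2), term a q M (n + 1) i =
      qbrA a q (M + n) * qbrA a q (n - 1) * ∑ i ∈ range (n + 1), term a q M n i := by
  set B := qbrA a q (M + n) * qbrA a q (n - 1)
  have hdiff : ∀ i ∈ range (n + 1), term a q M (n + 1) (i + 1) - B * term a q M n (i + 1) =
      telescoper a q M n (i + 1) - telescoper a q M n i := by
    intro i hi
    rcases (mem_range_succ_iff.mp hi).lt_or_eq with hlt | rfl
    · exact term_succ_sub_mul_term M ha hq hlt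
    · rw [term_succ_succ_self, term_eq_zero_at_succ, telescoper_eq_zero_at_succ]
      ring
  have hB : B * ∑ i ∈ range (n + 1), term a q M n i = ∑ i ∈ range (n + 2), B * term a q M n i := by
    rw [sum_range_succ _ (n + 1), term_eq_zero_at_succ, mul_zero, add_zero, mul_sum]
  rw [hB, ← sub_eq_zero, ← sum_sub_distrib, sum_range_succ', sum_congr rfl hdiff, sum_range_sub,
    term_zero_sub_mul_term M ha hq, telescoper_eq_zero_at_succ]
  ring

theorem sum_term (ha : a ≠ 0) (hq : q ≠ 0) (n : ℕ) :
    ∑ i ∈ range (n + 1), term a q M n i = qbrAP a q (M + n - 1) n * qbrAP a q (n - 2) n := by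
  induction n with
  | zero => simp [term]
  | succ n ih =>
    rw [sum_term_succ M ha hq, ih, qbrAP_succ', qbrAP_succ']
    push_cast
    ring_nf

end BracketSum

theorem statement_4_general (a q : ℂ) (ha : a ≠ 0) (hq : q ≠ 0) (m n : ℕ) :
    ∑ i ∈ Finset.range (n + 1),
        (-1 : ℂ) ^ i * qbrP q m i * qbrP q n i *
          qbrAP a q ((m : ℤ) + (n : ℤ) - (i : ℤ) - 2) (n - i) *
          qbrAP a q ((n : ℤ) - 1) (n - i) =
      qbrAP a q ((m : ℤ) + (n : ℤ) - 1) n * qbrAP a q ((n : ℤ) - 2) n :=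
  BracketSum.sum_term m ha hq n

theorem statement_4 (a q : ℂ) (ha : a ≠ 0) (hq : q ≠ 0) (m n : ℕ) (hmn : n ≤ m) :
    ∑ i ∈ Finset.range (n + 1),
        (-1 : ℂ) ^ i * qbrP q m i * qbrP q n i *
          qbrAP a q ((m : ℤ) + (n : ℤ) - (i : ℤ) - 2) (n - i) *
          qbrAP a q ((n : ℤ) - 1) (n - i) =
      qbrAP a q ((m : ℤ) + (n : ℤ) - 1) n * qbrAP a q ((n : ℤ) - 2) n :=
  statement_4_general a q ha hq m n
end

section
/- Let a and q be nonzero complex numbers and let i, j, k ≥ 0 be integers with j + k ≤ i, and assume q^{2l} ≠ 1 for 1 ≤ l ≤ i. With β^{l}_{r,s:m,n} = ({m−s}_l {n−s}_l / ({m}_r {n}_r)) · {s}_{r−l} · [r choose l]_q · {m+n−s−l−1; a}_{r−l}, one has β^{j}_{i−k, i−j : i, i} = {j}! {k}! {i−1; a}_{i−j−k} / ({i}_j {i}_k {i−j−k}!), and in particular β^{j}_{i−k, i−j : i, i} = β^{k}_{i−j, i−k : i, i}. -/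
open Finset

/-- The coefficient `β^{l}_{r,s:m,n} = ({m−s}_l {n−s}_l / ({m}_r {n}_r)) · {s}_{r−l} ·
[r choose l]_q · {m+n−s−l−1; a}_{r−l}`. -/
noncomputable def qbeta (a q : ℂ) (m n : ℤ) (r s l : ℕ) : ℂ :=
  (qbrP q (m - (s : ℤ)) l * qbrP q (n - (s : ℤ)) l / (qbrP q m r * qbrP q n r)) *
    qbrP q (s : ℤ) (r - l) * qbinom q r l *
    qbrAP a q (m + n - (s : ℤ) - (l : ℤ) - 1) (r - l)

/-!
Every descending product occurring in `β^{j}_{i−k, i−j : i, i}` is a quotient of two q-factorials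
`{n}_r = {n}! / {n−r}!` with `n ≤ i`, and these factorials are nonzero because no `q^{2l}`,
`1 ≤ l ≤ i`, equals `1`. After these substitutions both sides are rational expressions in
q-factorials and `{i−1; a}_{i−j−k}`, and the formula is a field identity. It is symmetric in
`j` and `k`, which gives the symmetry of `β`.
-/

lemma qbrP_add (q : ℂ) (n : ℤ) (r s : ℕ) :
    qbrP q n (r + s) = qbrP q n r * qbrP q (n - r) s := by
  unfold qbrP
  rw [prod_range_add]
  congr 1
  refine prod_congr rfl fun x _ => ?_
  push_cast
  ring_nf

lemma qfac_eq_qbrP_mul_qfac (q : ℂ) {n r : ℕ} (h : r ≤ n) :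
    qfac q n = qbrP q n r * qfac q (n - r) := by
  unfold qfac
  push_cast [h]
  rw [← qbrP_add, Nat.add_sub_cancel' h]

lemma qbrP_eq_qfac_div_qfac (q : ℂ) {n r : ℕ} (h : r ≤ n) (hne : qfac q (n - r) ≠ 0) :
    qbrP q n r = qfac q n / qfac q (n - r) :=
  (eq_div_iff hne).mpr (qfac_eq_qbrP_mul_qfac q h).symm

lemma qbr_natCast_ne_zero {q : ℂ} (hq : q ≠ 0) {m : ℕ} (h : q ^ (2 * m) ≠ 1) :
    qbr q m ≠ 0 := by
  intro h0
  apply h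
  have hpow : q ^ (m : ℤ) = q ^ (-(m : ℤ)) := sub_eq_zero.mp h0
  calc q ^ (2 * m) = q ^ (m : ℤ) * q ^ (m : ℤ) := by rw [two_mul, pow_add, zpow_natCast]
    _ = q ^ (m : ℤ) * q ^ (-(m : ℤ)) := by rw [← hpow]
    _ = 1 := by rw [← zpow_add₀ hq, add_neg_cancel, zpow_zero]

lemma qfac_ne_zero {q : ℂ} (hq : q ≠ 0) {n : ℕ}
    (hroot : ∀ l : ℕ, 1 ≤ l → l ≤ n → q ^ (2 * l) ≠ 1) : qfac q n ≠ 0 := by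
  unfold qfac qbrP
  refine prod_ne_zero_iff.mpr fun k hk => ?_
  have hk : k < n := mem_range.mp hk
  rw [show (n : ℤ) - k = ((n - k : ℕ) : ℤ) by omega]
  exact qbr_natCast_ne_zero hq (hroot _ (by omega) (by omega))

lemma qbeta_diag_eq (a q : ℂ) {i j k : ℕ} (hjk : j + k ≤ i)
    (hfac : ∀ m ≤ i, qfac q m ≠ 0) :
    qbeta a q i i (i - k) (i - j) j =
      qfac q j * qfac q k * qbrAP a q ((i : ℤ) - 1) (i - j - k) /
        (qbrP q i j * qbrP q i k * qfac q (i - j - k)) := by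
  have hFk := hfac k (by omega)
  have hFij := hfac (i - j) (by omega)
  have hFik := hfac (i - k) (by omega)
  unfold qbeta qbinom
  rw [show (i : ℤ) - ((i - j : ℕ) : ℤ) = ((j : ℕ) : ℤ) by omega,
    show (i : ℤ) + i - ((i - j : ℕ) : ℤ) - j - 1 = i - 1 by omega,
    show i - k - j = i - j - k by omega]
  change qfac q j * qfac q j / _ * _ * (qfac q (i - k) / (qfac q j * qfac q (i - j - k))) * _ = _
  rw [qbrP_eq_qfac_div_qfac q (show i - k ≤ i by omega) (by rwa [Nat.sub_sub_self (by omega)]),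
    qbrP_eq_qfac_div_qfac q (show i - j - k ≤ i - j by omega) (by rwa [Nat.sub_sub_self (by omega)]),
    qbrP_eq_qfac_div_qfac q (show j ≤ i by omega) hFij,
    qbrP_eq_qfac_div_qfac q (show k ≤ i by omega) hFik,
    Nat.sub_sub_self (show k ≤ i by omega), Nat.sub_sub_self (show k ≤ i - j by omega)]
  field_simp

theorem statement_8_general (a q : ℂ) (hq : q ≠ 0) (i j k : ℕ) (hjk : j + k ≤ i)
    (hroot : ∀ l : ℕ, 1 ≤ l → l ≤ i → q ^ (2 * l) ≠ 1) :
    qbeta a q i i (i - k) (i - j) j =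
        qfac q j * qfac q k * qbrAP a q ((i : ℤ) - 1) (i - j - k) /
          (qbrP q i j * qbrP q i k * qfac q (i - j - k)) ∧
      qbeta a q i i (i - k) (i - j) j = qbeta a q i i (i - j) (i - k) k := by
  have hfac : ∀ m ≤ i, qfac q m ≠ 0 := fun m hm =>
    qfac_ne_zero hq fun l hl hlm => hroot l hl (hlm.trans hm)
  have hjk' : k + j ≤ i := by omega
  refine ⟨qbeta_diag_eq a q hjk hfac, ?_⟩
  rw [qbeta_diag_eq a q hjk hfac, qbeta_diag_eq a q hjk' hfac, Nat.sub_right_comm i k j]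
  ring

theorem statement_8 (a q : ℂ) (ha : a ≠ 0) (hq : q ≠ 0) (i j k : ℕ) (hjk : j + k ≤ i)
    (hroot : ∀ l : ℕ, 1 ≤ l → l ≤ i → q ^ (2 * l) ≠ 1) :
    qbeta a q i i (i - k) (i - j) j =
        qfac q j * qfac q k * qbrAP a q ((i : ℤ) - 1) (i - j - k) /
          (qbrP q i j * qbrP q i k * qfac q (i - j - k)) ∧
      qbeta a q i i (i - k) (i - j) j = qbeta a q i i (i - j) (i - k) k :=
  statement_8_general a q hq i j k hjk hroot
end
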